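/- Let (M,F) be a model for a self-affine ℤⁿ-tile T = T(A,D) with the same neighbor structure (𝒦(T) = 𝒦(M)). Then for every S ∈ 𝒦(T) and k ∈ ℕ: F^{(k)}(⟨S⟩_M) = ⟨P^{(k)}(S)⟩_M, where ⟨S⟩_M = ⋂_{s∈S}(M+s) and P is the subdivision operator. -/

import Mathlib

open Set Matrix Function

/-- The real matrix obtained from an integer matrix. -/
def intMatToReal {n : ℕ} (A : Matrix (Fin n) (Fin n) ℤ) : Matrix (Fin n) (Fin n) ℝ :=
  A.map (Int.cast : ℤ → ℝ)

/-- The real vector obtained from an integer vector. -/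
def intVecToReal {n : ℕ} (z : Fin n → ℤ) : Fin n → ℝ := fun i => (z i : ℝ)

/-- The cell `⟨S⟩_X = ⋂_{s∈S} (X+s)`. -/
def cellOf {n : ℕ} (X : Set (Fin n → ℝ)) (S : Set (Fin n → ℤ)) : Set (Fin n → ℝ) :=
  ⋂ s ∈ S, (fun x => x + intVecToReal s) '' X

/-- The neighbor structure `𝒦(X)`: nonempty `S ⊆ ℤⁿ` with `⟨S⟩_X ≠ ∅`. -/
def neighborStructure {n : ℕ} (X : Set (Fin n → ℝ)) : Set (Set (Fin n → ℤ)) :=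
  {S | S.Nonempty ∧ (cellOf X S).Nonempty}

/-- The subdivision operator `P(S) = {(p+A)(S) ∈ 𝒦(T) ∣ p ∈ D^S}`. -/
def subdivOp {n : ℕ} (A : Matrix (Fin n) (Fin n) ℤ) (D : Set (Fin n → ℤ))
    (T : Set (Fin n → ℝ)) (S : Set (Fin n → ℤ)) : Set (Set (Fin n → ℤ)) :=
  {S' | S' ∈ neighborStructure T ∧ ∃ p : (Fin n → ℤ) → (Fin n → ℤ),
    (∀ s ∈ S, p s ∈ D) ∧ S' = (fun s => p s + A.mulVec s) '' S}

/-- The subdivision operator extended to collections. -/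
def subdivColl {n : ℕ} (A : Matrix (Fin n) (Fin n) ℤ) (D : Set (Fin n → ℤ))
    (T : Set (Fin n → ℝ)) (𝒞 : Set (Set (Fin n → ℤ))) : Set (Set (Fin n → ℤ)) :=
  {S' | ∃ S ∈ 𝒞, S' ∈ subdivOp A D T S}

/-- The geometric realization `⟨𝒞⟩_X = ⋃_{S∈𝒞} ⟨S⟩_X` of a collection of cells. -/
def cellColl {n : ℕ} (X : Set (Fin n → ℝ)) (𝒞 : Set (Set (Fin n → ℤ))) :
    Set (Fin n → ℝ) :=
  ⋃ S ∈ 𝒞, cellOf X S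

/-- `M` is a `ℤⁿ`-tile. -/
def IsZnTile {n : ℕ} (M : Set (Fin n → ℝ)) : Prop :=
  IsCompact M ∧ M = closure (interior M) ∧
  MeasureTheory.volume (frontier M) = 0 ∧
  (⋃ z : Fin n → ℤ, (fun x => x + intVecToReal z) '' M) = Set.univ ∧
  Pairwise fun z z' : Fin n → ℤ =>
    Disjoint (interior ((fun x => x + intVecToReal z) '' M))
      (interior ((fun x => x + intVecToReal z') '' M))

/-!
Since `A` is expanding it is invertible, so equivariance reads `F(x + z) = F(x) + Az`; with
`F(M) = M + D` this gives `F(M + s) = M + D + As`. Hence `F(⟨S⟩_M) = ⋂_{s∈S} (M + D + As)` is the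
union of the cells `⟨(p+A)(S)⟩_M` over `p ∈ D^S`. The empty ones contribute nothing and the
nonempty ones lie in `𝒦(M) = 𝒦(T)`, so they are exactly the members of `P(S)`. As a bijection, `F`
commutes with unions, and induction on `k` gives the claim.
-/

section
variable {n : ℕ}

lemma intVecToReal_add (a b : Fin n → ℤ) :
    intVecToReal (a + b) = intVecToReal a + intVecToReal b := by
  funext i
  simp [intVecToReal]

lemma intVecToReal_mulVec (A : Matrix (Fin n) (Fin n) ℤ) (z : Fin n → ℤ) :
    intVecToReal (A *ᵥ z) = intMatToReal A *ᵥ intVecToReal z :=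
  funext fun i => (Int.castRingHom ℝ).map_mulVec A z i

lemma det_intMatToReal_ne_zero {A : Matrix (Fin n) (Fin n) ℤ}
    (hA : ∀ μ ∈ (A.map (Int.cast : ℤ → ℂ)).charpoly.roots, 1 < ‖μ‖) :
    (intMatToReal A).det ≠ 0 := by
  have hC : ((A.det : ℤ) : ℂ) ≠ 0 := by
    rw [Int.cast_det, det_eq_prod_roots_charpoly]
    exact Multiset.prod_ne_zero fun h0 => (hA 0 h0).not_ge (by simp)
  rw [intMatToReal, ← Int.cast_det]
  exact_mod_cast hC

lemma map_add_intVecToReal_of_equivariant {A : Matrix (Fin n) (Fin n) ℤ}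
    (hA : (intMatToReal A).det ≠ 0) {F : (Fin n → ℝ) → (Fin n → ℝ)}
    (hF : ∀ x z, (intMatToReal A)⁻¹ *ᵥ F (x + intVecToReal z)
      = (intMatToReal A)⁻¹ *ᵥ F x + intVecToReal z)
    (x : Fin n → ℝ) (z : Fin n → ℤ) :
    F (x + intVecToReal z) = F x + intVecToReal (A *ᵥ z) := by
  apply mulVec_injective_iff_isUnit.mpr (isUnit_nonsing_inv_iff.mpr
    ((isUnit_iff_isUnit_det _).mpr hA.isUnit))
  rw [hF, mulVec_add, intVecToReal_mulVec, mulVec_mulVec,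
    nonsing_inv_mul _ hA.isUnit, one_mulVec]

variable {A : Matrix (Fin n) (Fin n) ℤ} {D : Set (Fin n → ℤ)} {T M : Set (Fin n → ℝ)}
  {F : (Fin n → ℝ) → (Fin n → ℝ)}

lemma image_translate_of_map_add
    (hFM : F '' M = ⋃ d ∈ D, (· + intVecToReal d) '' M)
    (hF : ∀ x z, F (x + intVecToReal z) = F x + intVecToReal (A *ᵥ z)) (s : Fin n → ℤ) :
    F '' ((· + intVecToReal s) '' M) = ⋃ d ∈ D, (· + intVecToReal (d + A *ᵥ s)) '' M := by
  have hshift : F '' ((· + intVecToReal s) '' M)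
      = (· + intVecToReal (A *ᵥ s)) '' (F '' M) := by
    simp only [image_image, hF]
  rw [hshift, hFM, image_iUnion₂]
  simp only [image_image, intVecToReal_add, add_assoc]

lemma image_cellOf (hbij : Bijective F)
    (hFM : F '' M = ⋃ d ∈ D, (· + intVecToReal d) '' M)
    (hF : ∀ x z, F (x + intVecToReal z) = F x + intVecToReal (A *ᵥ z)) (S : Set (Fin n → ℤ)) :
    F '' cellOf M S
      = ⋃ p ∈ {p : (Fin n → ℤ) → (Fin n → ℤ) | ∀ s ∈ S, p s ∈ D},
          cellOf M ((fun s => p s + A *ᵥ s) '' S) := by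
  rw [cellOf, image_iInter₂ hbij]
  simp only [image_translate_of_map_add hFM hF, cellOf, biInter_image]
  ext y
  simp only [mem_iInter, mem_iUnion, mem_ofPred_eq, exists_prop]
  constructor
  · intro h
    choose! p hpD hy using h
    exact ⟨p, hpD, hy⟩
  · rintro ⟨p, hpD, hy⟩ s hs
    exact ⟨p s, hpD s hs, hy s hs⟩

lemma iUnion_cellOf_eq_cellColl_subdivOp (hsame : neighborStructure T = neighborStructure M)
    {S : Set (Fin n → ℤ)} (hS : S.Nonempty) :
    ⋃ p ∈ {p : (Fin n → ℤ) → (Fin n → ℤ) | ∀ s ∈ S, p s ∈ D},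
        cellOf M ((fun s => p s + A *ᵥ s) '' S)
      = cellColl M (subdivOp A D T S) := by
  apply Subset.antisymm
  · simp only [iUnion_subset_iff]
    intro p hpD y hy
    have hmem : (fun s => p s + A *ᵥ s) '' S ∈ neighborStructure T :=
      hsame ▸ ⟨hS.image _, y, hy⟩
    exact mem_biUnion ⟨hmem, p, hpD, rfl⟩ hy
  · simp only [cellColl, iUnion_subset_iff]
    rintro _ ⟨-, p, hpD, rfl⟩
    exact fun y hy => mem_iUnion₂.mpr ⟨p, hpD, hy⟩

lemma image_cellOf_eq_cellColl_subdivOp (hbij : Bijective F)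
    (hFM : F '' M = ⋃ d ∈ D, (· + intVecToReal d) '' M)
    (hF : ∀ x z, F (x + intVecToReal z) = F x + intVecToReal (A *ᵥ z))
    (hsame : neighborStructure T = neighborStructure M) {S : Set (Fin n → ℤ)} (hS : S.Nonempty) :
    F '' cellOf M S = cellColl M (subdivOp A D T S) := by
  rw [image_cellOf hbij hFM hF, iUnion_cellOf_eq_cellColl_subdivOp hsame hS]

lemma cellColl_subdivColl (𝒞 : Set (Set (Fin n → ℤ))) :
    cellColl M (subdivColl A D T 𝒞) = ⋃ S ∈ 𝒞, cellColl M (subdivOp A D T S) := by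
  ext y
  simp only [cellColl, subdivColl, mem_iUnion, mem_ofPred_eq, exists_prop]
  constructor
  · rintro ⟨S', ⟨S, hS, hS'⟩, hy⟩
    exact ⟨S, hS, S', hS', hy⟩
  · rintro ⟨S, hS, S', hS', hy⟩
    exact ⟨S', ⟨S, hS, hS'⟩, hy⟩

lemma image_cellColl (hbij : Bijective F)
    (hFM : F '' M = ⋃ d ∈ D, (· + intVecToReal d) '' M)
    (hF : ∀ x z, F (x + intVecToReal z) = F x + intVecToReal (A *ᵥ z))
    (hsame : neighborStructure T = neighborStructure M) {𝒞 : Set (Set (Fin n → ℤ))}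
    (h𝒞 : ∀ S ∈ 𝒞, S.Nonempty) :
    F '' cellColl M 𝒞 = cellColl M (subdivColl A D T 𝒞) := by
  rw [cellColl, image_iUnion₂, cellColl_subdivColl]
  exact iUnion₂_congr fun S hS => image_cellOf_eq_cellColl_subdivOp hbij hFM hF hsame (h𝒞 S hS)

lemma nonempty_of_mem_subdivColl {𝒞 : Set (Set (Fin n → ℤ))} {S : Set (Fin n → ℤ)}
    (hS : S ∈ subdivColl A D T 𝒞) : S.Nonempty :=
  let ⟨_, _, hmem, _⟩ := hS
  hmem.1

lemma cellColl_singleton (S : Set (Fin n → ℤ)) : cellColl M {S} = cellOf M S :=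
  biUnion_singleton S (cellOf M)

end

theorem model_generalized_set_equation_general (n : ℕ) (A : Matrix (Fin n) (Fin n) ℤ)
    (hexp : ∀ μ ∈ (A.map (Int.cast : ℤ → ℂ)).charpoly.roots, 1 < ‖μ‖)
    (D : Set (Fin n → ℤ)) (T : Set (Fin n → ℝ)) (M : Set (Fin n → ℝ))
    (F : (Fin n → ℝ) ≃ₜ (Fin n → ℝ))
    (hFM : ⇑F '' M = ⋃ d ∈ D, (fun x => x + intVecToReal d) '' M)
    (hequiv : ∀ (x : Fin n → ℝ) (z : Fin n → ℤ),
      (intMatToReal A)⁻¹.mulVec (F (x + intVecToReal z))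
        = (intMatToReal A)⁻¹.mulVec (F x) + intVecToReal z)
    (hsame : neighborStructure T = neighborStructure M)
    (S : Set (Fin n → ℤ)) (hS : S ∈ neighborStructure T) :
    ∀ k : ℕ, (⇑F)^[k] '' cellOf M S = cellColl M ((subdivColl A D T)^[k] {S}) := by
  have hF := map_add_intVecToReal_of_equivariant (det_intMatToReal_ne_zero hexp) hequiv
  intro k
  induction k with
  | zero => simp [cellColl_singleton]
  | succ k ih =>
    have hne : ∀ S' ∈ (subdivColl A D T)^[k] {S}, S'.Nonempty := by
      cases k with
      | zero => simpa using hS.1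
      | succ k =>
        rw [iterate_succ_apply']
        exact fun _ => nonempty_of_mem_subdivColl
    rw [iterate_succ', image_comp, ih, image_cellColl F.bijective hFM hF hsame hne,
      iterate_succ_apply']

/-- for a model `(M,F)` of a self-affine `ℤⁿ`-tile `T` with the same
neighbor structure, `F^{(k)}(⟨S⟩_M) = ⟨P^{(k)}(S)⟩_M` for all `S ∈ 𝒦(T)` and `k ∈ ℕ`. -/
theorem model_generalized_set_equation (n : ℕ) (A : Matrix (Fin n) (Fin n) ℤ)
    (hexp : ∀ μ ∈ (A.map (Int.cast : ℤ → ℂ)).charpoly.roots, 1 < ‖μ‖)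
    (D : Set (Fin n → ℤ))
    (hD : ∀ z : Fin n → ℤ, ∃! d, d ∈ D ∧ ∃ y : Fin n → ℤ, z = d + A.mulVec y)
    (T : Set (Fin n → ℝ)) (hTne : T.Nonempty) (hTc : IsCompact T)
    (hTset : (fun x => (intMatToReal A).mulVec x) '' T
      = ⋃ d ∈ D, (fun x => x + intVecToReal d) '' T)
    (M : Set (Fin n → ℝ)) (hM : IsZnTile M)
    (F : (Fin n → ℝ) ≃ₜ (Fin n → ℝ))
    (hFM : ⇑F '' M = ⋃ d ∈ D, (fun x => x + intVecToReal d) '' M)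
    (hequiv : ∀ (x : Fin n → ℝ) (z : Fin n → ℤ),
      (intMatToReal A)⁻¹.mulVec (F (x + intVecToReal z))
        = (intMatToReal A)⁻¹.mulVec (F x) + intVecToReal z)
    (hF0 : F 0 = 0)
    (hsame : neighborStructure T = neighborStructure M)
    (S : Set (Fin n → ℤ)) (hS : S ∈ neighborStructure T) :
    ∀ k : ℕ, (⇑F)^[k] '' cellOf M S = cellColl M ((subdivColl A D T)^[k] {S}) :=
  model_generalized_set_equation_general n A hexp D T M F hFM hequiv hsame S hS
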